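/- Let X be a fixed n×d real matrix and β* ∈ ℝ^d. Let Π* be a random n×n permutation matrix and ε ∈ ℝⁿ an integrable random vector with E[ε] = 0, with Π* and ε independent, and set y = Π* X β* + σ* ε for some σ* > 0. Let Q = E[Π*] and assume Q X has full column rank d. Then the Lahiri–Larsen estimator β̂^LL = (Xᵀ Qᵀ Q X)⁻¹ Xᵀ Qᵀ y satisfies E[β̂^LL] = β*. -/
import Mathlib

open MeasureTheory ProbabilityTheory Matrix
open scoped BigOperators

/-- Auxiliary: a square matrix over a field with full rank has unit determinant. -/
lemma aux_isUnit_det_of_rank_eq {d : ℕ} (B : Matrix (Fin d) (Fin d) ℝ)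
    (hB : B.rank = d) : IsUnit B.det := by
  rw [isUnit_iff_ne_zero]
  intro h0
  obtain ⟨v, hv0, hv⟩ := (Matrix.exists_mulVec_eq_zero_iff).mpr h0
  have hker : v ∈ LinearMap.ker B.mulVecLin := by
    simpa [Matrix.mulVecLin_apply] using hv
  have hrn := LinearMap.finrank_range_add_finrank_ker B.mulVecLin
  rw [Module.finrank_pi] at hrn
  have hrank : Module.finrank ℝ (LinearMap.range B.mulVecLin) = d := hB
  rw [Fintype.card_fin, hrank] at hrn
  have hk0 : Module.finrank ℝ (LinearMap.ker B.mulVecLin) = 0 := by omega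
  rw [Submodule.finrank_eq_zero] at hk0
  rw [hk0, Submodule.mem_bot] at hker
  exact hv0 hker

/-- the Lahiri–Larsen estimator `β̂^LL = (XᵀQᵀQX)⁻¹XᵀQᵀy`, with
`Q = E[Π*]` and `y = Π* X β* + σ* ε` for a random permutation matrix `Π*`
independent of the mean-zero noise `ε`, is unbiased: `E[β̂^LL] = β*`
(assuming `QX` has full column rank `d`). -/
theorem lahiri_larsen_unbiased (n d : ℕ)
    (X : Matrix (Fin n) (Fin d) ℝ) (β : Fin d → ℝ) (σ : ℝ) (hσ : 0 < σ)
    (Ω : Type*) [MeasureSpace Ω] [IsProbabilityMeasure (ℙ : Measure Ω)]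
    (P : Ω → Fin n → Fin n → ℝ) (ε : Ω → Fin n → ℝ)
    (hPm : Measurable P) (hεm : Measurable ε)
    -- Π* is a random permutation matrix
    (hperm : ∀ ω, ∃ σ' : Equiv.Perm (Fin n), Matrix.of (P ω) = Equiv.Perm.permMatrix ℝ σ')
    -- ε is integrable with mean zero, independent of Π*
    (hεint : Integrable ε ℙ) (hεmean : ∫ ω, ε ω ∂ℙ = 0)
    (hindep : IndepFun P ε ℙ)
    (y : Ω → Fin n → ℝ)
    (hy : y = fun ω => (Matrix.of (P ω) * X).mulVec β + σ • ε ω)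
    (Q : Matrix (Fin n) (Fin n) ℝ) (hQ : ∀ i j, Q i j = ∫ ω, P ω i j ∂ℙ)
    -- Q X has full column rank
    (hrank : (Q * X).rank = d)
    (βLL : Ω → Fin d → ℝ)
    (hβLL : βLL = fun ω => ((Xᵀ * Qᵀ * Q * X)⁻¹ * Xᵀ * Qᵀ).mulVec (y ω)) :
    ∫ ω, βLL ω ∂ℙ = β := by
  classical
  -- entries of P are 0 or 1
  have hP01 : ∀ ω i j, P ω i j = 0 ∨ P ω i j = 1 := by
    intro ω i j
    obtain ⟨σ', hσ'⟩ := hperm ω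
    have h := congrFun (congrFun hσ' i) j
    simp only [Matrix.of_apply] at h
    rw [h]
    simp only [Equiv.Perm.permMatrix, PEquiv.toMatrix_apply]
    split <;> simp
  have hPabs : ∀ ω i j, |P ω i j| ≤ 1 := by
    intro ω i j
    rcases hP01 ω i j with h | h <;> rw [h] <;> norm_num
  have hPij : ∀ i j, Measurable (fun ω => P ω i j) := fun i j => hPm.eval.eval
  have hPint : ∀ i j, Integrable (fun ω => P ω i j) ℙ := by
    intro i j
    refine Integrable.mono' (integrable_const 1) (hPij i j).aestronglyMeasurable ?_
    filter_upwards with ω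
    simpa [Real.norm_eq_abs] using hPabs ω i j
  set v : Fin n → ℝ := X.mulVec β with hv
  set g : Ω → Fin n → ℝ := fun ω => (Matrix.of (P ω)).mulVec v with hg
  have hgm : Measurable g := by
    apply measurable_pi_lambda
    intro i
    simp only [hg, Matrix.mulVec, dotProduct, Matrix.of_apply]
    exact Finset.measurable_sum _ fun j _ => (hPij i j).mul_const _
  have hgint : Integrable g ℙ := by
    refine Integrable.mono' (integrable_const (∑ j, |v j|)) hgm.aestronglyMeasurable ?_
    filter_upwards with ω
    rw [pi_norm_le_iff_of_nonneg (Finset.sum_nonneg fun j _ => abs_nonneg _)]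
    intro i
    calc ‖g ω i‖ = |∑ j, P ω i j * v j| := by
            simp only [hg, Matrix.mulVec, dotProduct, Matrix.of_apply, Real.norm_eq_abs]
      _ ≤ ∑ j, |P ω i j * v j| := Finset.abs_sum_le_sum_abs _ _
      _ ≤ ∑ j, |v j| := by
          refine Finset.sum_le_sum fun j _ => ?_
          rw [abs_mul]
          calc |P ω i j| * |v j| ≤ 1 * |v j| :=
                mul_le_mul_of_nonneg_right (hPabs ω i j) (abs_nonneg _)
            _ = |v j| := one_mul _
  -- integral of g is Q.mulVec v
  have hgi : ∫ ω, g ω ∂ℙ = Q.mulVec v := by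
    funext i
    have := (ContinuousLinearMap.proj (R := ℝ) (φ := fun _ : Fin n => ℝ)
      i).integral_comp_comm hgint
    rw [show (∫ ω, g ω ∂ℙ) i = (ContinuousLinearMap.proj (R := ℝ)
      (φ := fun _ : Fin n => ℝ) i) (∫ ω, g ω ∂ℙ) from rfl, ← this]
    simp only [ContinuousLinearMap.proj_apply]
    have hgc : ∀ ω, g ω i = ∑ j, P ω i j * v j := fun ω => by
      simp only [hg, Matrix.mulVec, dotProduct, Matrix.of_apply]
    simp_rw [hgc]
    rw [integral_finset_sum _ fun j _ => (hPint i j).mul_const _]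
    simp_rw [integral_mul_const]
    simp only [Matrix.mulVec, dotProduct]
    exact Finset.sum_congr rfl fun j _ => by rw [hQ i j]
  -- y equals g + σ • ε and is integrable
  have hyeq : y = fun ω => g ω + σ • ε ω := by
    rw [hy]; funext ω
    congr 1
    rw [hg, hv, ← Matrix.mulVec_mulVec]
  have hεsint : Integrable (fun ω => σ • ε ω) ℙ := hεint.smul σ
  have hyint : Integrable y ℙ := by rw [hyeq]; exact hgint.add hεsint
  have hyi : ∫ ω, y ω ∂ℙ = (Q * X).mulVec β := by
    rw [hyeq, integral_add hgint hεsint, hgi]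
    have : ∫ ω, σ • ε ω ∂ℙ = σ • ∫ ω, ε ω ∂ℙ := integral_smul σ ε
    rw [this, hεmean, smul_zero, add_zero, hv, Matrix.mulVec_mulVec]
  -- the matrix B is invertible
  set M : Matrix (Fin d) (Fin n) ℝ := (Xᵀ * Qᵀ * Q * X)⁻¹ * Xᵀ * Qᵀ with hM
  have hBrank : (Xᵀ * Qᵀ * Q * X).rank = d := by
    have : Xᵀ * Qᵀ * Q * X = (Q * X)ᵀ * (Q * X) := by
      rw [Matrix.transpose_mul]; simp only [Matrix.mul_assoc]
    rw [this, Matrix.rank_transpose_mul_self, hrank]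
  have hBdet : IsUnit (Xᵀ * Qᵀ * Q * X).det := aux_isUnit_det_of_rank_eq _ hBrank
  have hMQX : M * (Q * X) = 1 := by
    rw [hM]
    have : (Xᵀ * Qᵀ * Q * X)⁻¹ * Xᵀ * Qᵀ * (Q * X)
        = (Xᵀ * Qᵀ * Q * X)⁻¹ * (Xᵀ * Qᵀ * Q * X) := by simp only [Matrix.mul_assoc]
    rw [this, Matrix.nonsing_inv_mul _ hBdet]
  -- conclude via the continuous linear map x ↦ M.mulVec x
  set L : (Fin n → ℝ) →L[ℝ] (Fin d → ℝ) := LinearMap.toContinuousLinearMap M.mulVecLin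
    with hL
  have hLapp : ∀ z, L z = M.mulVec z := fun z => by
    simp only [hL, LinearMap.coe_toContinuousLinearMap', Matrix.mulVecLin_apply]
  have hβLL' : βLL = fun ω => L (y ω) := by
    rw [hβLL]; funext ω; rw [hLapp, hM]
  rw [hβLL', L.integral_comp_comm hyint, hyi, hLapp,
    Matrix.mulVec_mulVec, hMQX, Matrix.one_mulVec]
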